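/- For every fixed τ ∈ ℝ, C₁₂(Δ,τ) → 0 as Δ → 0, and C₁₁(Δ,τ) → (2ν₁/(1−‖h‖_{L¹}‖g‖_{L¹})) · 1_{{τ=0}} as Δ → 0 (this is the Epps effect). -/

import Mathlib

open MeasureTheory Set Filter Topology

noncomputable section

/-- Convolution of two functions on `ℝ` (w.r.t. Lebesgue measure). -/
def conv (f g : ℝ → ℝ) (t : ℝ) : ℝ := ∫ s, f (t - s) * g s

/-- `convPow f n = f^{⋆(n+1)}`, the `(n+1)`-fold convolution power of `f`. -/
def convPow (f : ℝ → ℝ) : ℕ → ℝ → ℝ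
  | 0 => f
  | n + 1 => conv f (convPow f n)

/-- `F = Σ_{n ≥ 1} (h⋆g)^{⋆n}`. -/
def Ffun (h g : ℝ → ℝ) (t : ℝ) : ℝ := ∑' n, convPow (conv h g) n t

/-- `ν₁ = μ₁ + ‖h‖_{L¹} μ₃`. -/
def nu1 (h g : ℝ → ℝ) (μ1 μ3 : ℝ) : ℝ := μ1 + (∫ t, h t) * μ3

/-- `ν₂ = μ₃ + ‖g‖_{L¹} μ₁`. -/
def nu2 (h g : ℝ → ℝ) (μ1 μ3 : ℝ) : ℝ := μ3 + (∫ t, g t) * μ1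

/-- The measure `δ₀ + (F + F̌ + F⋆F̌)(t) dt` on `ℝ`. -/
def rhoMeas (h g : ℝ → ℝ) : Measure ℝ :=
  Measure.dirac 0 + volume.withDensity fun t =>
    ENNReal.ofReal
      (Ffun h g t + Ffun h g (-t) + conv (Ffun h g) (fun s => Ffun h g (-s)) t)

/-- The measure `ν₁ δ₀ + ν₂ (h⋆ȟ)(t) dt` on `ℝ`. -/
def sigMeas11 (h g : ℝ → ℝ) (μ1 μ3 : ℝ) : Measure ℝ :=
  ENNReal.ofReal (nu1 h g μ1 μ3) • Measure.dirac 0 +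
    volume.withDensity fun t =>
      ENNReal.ofReal (nu2 h g μ1 μ3 * conv h (fun s => h (-s)) t)

/-- The measure `(ν₂ ȟ + ν₁ g)(t) dt` on `ℝ`. -/
def sigMeas12 (h g : ℝ → ℝ) (μ1 μ3 : ℝ) : Measure ℝ :=
  volume.withDensity fun t =>
    ENNReal.ofReal (nu2 h g μ1 μ3 * h (-t) + nu1 h g μ1 μ3 * g t)

/-- `γ_Δ(x) = (1 − |x|/Δ)⁺`. -/
def gamDelta (Δ x : ℝ) : ℝ := max (1 - |x| / Δ) 0

/-- `C₁₁(Δ,τ) = (2/(1−‖h‖₁‖g‖₁)) γ_Δ ⋆ (δ₀+F+F̌+F⋆F̌) ⋆ (ν₁δ₀ + ν₂ h⋆ȟ) (τ)`. -/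
def C11 (h g : ℝ → ℝ) (μ1 μ3 Δ τ : ℝ) : ℝ :=
  (2 / (1 - (∫ t, h t) * (∫ t, g t))) *
    ∫ x, (∫ y, gamDelta Δ (τ - x - y) ∂(sigMeas11 h g μ1 μ3)) ∂(rhoMeas h g)

/-- `C₁₂(Δ,τ) = (2/(1−‖h‖₁‖g‖₁)) γ_Δ ⋆ (δ₀+F+F̌+F⋆F̌) ⋆ (ν₂ ȟ + ν₁ g) (τ)`. -/
def C12 (h g : ℝ → ℝ) (μ1 μ3 Δ τ : ℝ) : ℝ :=
  (2 / (1 - (∫ t, h t) * (∫ t, g t))) *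
    ∫ x, (∫ y, gamDelta Δ (τ - x - y) ∂(sigMeas12 h g μ1 μ3)) ∂(rhoMeas h g)

/-!
The measure `δ₀ + F + F̌ + F ⋆ F̌` is finite because `‖(h ⋆ g)^{⋆n}‖₁ = (‖h‖₁‖g‖₁)ⁿ` is summable
when `‖h‖₁‖g‖₁ < 1`. For finite measures `ρ, σ` the kernels `γ_Δ` are bounded by `1` and
converge pointwise to the indicator of `{0}` as `Δ → 0⁺`, so dominated convergence (applied to
the inner and then to the outer integral) gives `γ_Δ ⋆ ρ ⋆ σ (τ) → ∫ σ{τ - x} dρ(x)`. Only atoms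
contribute to this limit: the absolutely continuous parts have none, so for `C₁₂` it vanishes,
and for `C₁₁` only the product of the atoms `δ₀` and `ν₁ δ₀` survives, giving `ν₁ 1_{τ = 0}`.
-/

open scoped ENNReal Convolution

section Convolution

variable {f g : ℝ → ℝ}

lemma conv_nonneg (hf : ∀ t, 0 ≤ f t) (hg : ∀ t, 0 ≤ g t) (t : ℝ) : 0 ≤ conv f g t :=
  integral_nonneg fun _ => mul_nonneg (hf _) (hg _)

lemma conv_eq_convolution (f g : ℝ → ℝ) : conv f g = g ⋆[ContinuousLinearMap.mul ℝ ℝ] f := by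
  ext t
  simp only [conv, convolution, ContinuousLinearMap.mul_apply', mul_comm]

lemma MeasureTheory.Integrable.conv (hf : Integrable f) (hg : Integrable g) :
    Integrable (conv f g) := by
  rw [conv_eq_convolution]
  exact hg.integrable_convolution _ hf

lemma integral_conv_eq_mul (hf : Integrable f) (hg : Integrable g) :
    ∫ t, conv f g t = (∫ t, f t) * ∫ t, g t := by
  rw [conv_eq_convolution, integral_convolution _ hg hf]
  simp [mul_comm]

lemma convPow_nonneg (hf : ∀ t, 0 ≤ f t) : ∀ n t, 0 ≤ convPow f n t
  | 0, t => hf t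
  | n + 1, t => conv_nonneg hf (convPow_nonneg hf n) t

lemma MeasureTheory.Integrable.convPow (hf : Integrable f) : ∀ n, Integrable (convPow f n)
  | 0 => hf
  | n + 1 => hf.conv (hf.convPow n)

lemma integral_convPow (hf : Integrable f) : ∀ n, ∫ t, convPow f n t = (∫ t, f t) ^ (n + 1)
  | 0 => by simp [convPow]
  | n + 1 => by
    rw [convPow, integral_conv_eq_mul hf (hf.convPow n), integral_convPow hf n,
      pow_succ' _ (n + 1)]

end Convolution

lemma integrable_tsum_of_nonneg {α ι : Type*} [MeasurableSpace α] {μ : Measure α} [Countable ι]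
    {f : ι → α → ℝ} (hf : ∀ i, Integrable (f i) μ) (hf0 : ∀ i a, 0 ≤ f i a)
    (hsum : Summable fun i => ∫ a, f i a ∂μ) : Integrable (fun a => ∑' i, f i a) μ := by
  have hmeas : ∀ i, AEMeasurable (fun a => ENNReal.ofReal (f i a)) μ :=
    fun i => (hf i).aemeasurable.ennreal_ofReal
  have hlint : ∫⁻ a, ∑' i, ENNReal.ofReal (f i a) ∂μ ≠ ∞ := by
    rw [lintegral_tsum hmeas]
    simp_rw [← ofReal_integral_eq_lintegral_ofReal (hf _) (ae_of_all _ (hf0 _))]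
    rw [← ENNReal.ofReal_tsum_of_nonneg (fun i => integral_nonneg (hf0 i)) hsum]
    exact ENNReal.ofReal_ne_top
  convert integrable_toReal_of_lintegral_ne_top (AEMeasurable.tsum hmeas) hlint with a
  rw [ENNReal.tsum_toReal_eq fun _ => ENNReal.ofReal_ne_top]
  simp only [ENNReal.toReal_ofReal (hf0 _ a)]

section Kernel

lemma norm_gamDelta_le_one {Δ : ℝ} (hΔ : 0 < Δ) (x : ℝ) : ‖gamDelta Δ x‖ ≤ 1 := by
  rw [gamDelta, Real.norm_of_nonneg (le_max_right _ _)]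
  exact max_le (sub_le_self _ (by positivity)) zero_le_one

lemma continuous_gamDelta (Δ : ℝ) : Continuous (gamDelta Δ) :=
  (continuous_const.sub (continuous_abs.div_const Δ)).max continuous_const

lemma tendsto_gamDelta (x : ℝ) :
    Tendsto (fun Δ => gamDelta Δ x) (𝓝[>] 0) (𝓝 (if x = 0 then 1 else 0)) := by
  split_ifs with hx
  · simp [gamDelta, hx]
  · refine tendsto_const_nhds.congr' ?_
    filter_upwards [Ioo_mem_nhdsGT (abs_pos.2 hx)] with Δ hΔ
    have : 1 ≤ |x| / Δ := (one_le_div hΔ.1).2 hΔ.2.le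
    exact (max_eq_right (by linarith)).symm

variable (ρ σ : Measure ℝ) [IsFiniteMeasure ρ] [IsFiniteMeasure σ]

lemma tendsto_integral_gamDelta (z : ℝ) :
    Tendsto (fun Δ => ∫ y, gamDelta Δ (z - y) ∂σ) (𝓝[>] 0) (𝓝 (σ.real {z})) := by
  rw [← integral_indicator_one (measurableSet_singleton z)]
  refine tendsto_integral_filter_of_norm_le_const ?_ ⟨1, ?_⟩ (ae_of_all _ fun y => ?_)
  · exact .of_forall fun Δ =>
      ((continuous_gamDelta Δ).comp (continuous_sub_left z)).aestronglyMeasurable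
  · filter_upwards [self_mem_nhdsWithin] with Δ hΔ
    exact ae_of_all _ fun y => norm_gamDelta_le_one hΔ _
  · convert tendsto_gamDelta (z - y) using 2
    simp [Set.indicator_apply, sub_eq_zero, eq_comm]

lemma tendsto_integral_integral_gamDelta (τ : ℝ) :
    Tendsto (fun Δ => ∫ x, ∫ y, gamDelta Δ (τ - x - y) ∂σ ∂ρ) (𝓝[>] 0)
      (𝓝 (∫ x, σ.real {τ - x} ∂ρ)) := by
  refine tendsto_integral_filter_of_norm_le_const ?_ ⟨σ.real univ, ?_⟩
    (ae_of_all _ fun x => tendsto_integral_gamDelta σ (τ - x))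
  · refine .of_forall fun Δ => ?_
    have : StronglyMeasurable fun p : ℝ × ℝ => gamDelta Δ (τ - p.1 - p.2) :=
      ((continuous_gamDelta Δ).comp
        ((continuous_sub_left τ).comp continuous_fst |>.sub continuous_snd)).stronglyMeasurable
    exact this.integral_prod_right'.aestronglyMeasurable
  · filter_upwards [self_mem_nhdsWithin] with Δ hΔ
    refine ae_of_all _ fun x => ?_
    simpa using norm_integral_le_of_norm_le_const
      (ae_of_all σ fun y => norm_gamDelta_le_one hΔ (τ - x - y))

end Kernel

section Measures

variable {h g : ℝ → ℝ} {μ1 μ3 : ℝ}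

lemma integrable_Ffun (hnonneg : ∀ t, 0 ≤ h t) (gnonneg : ∀ t, 0 ≤ g t)
    (hint : Integrable h) (gint : Integrable g) (hlt : (∫ t, h t) * (∫ t, g t) < 1) :
    Integrable (Ffun h g) := by
  have hk := hint.conv gint
  refine integrable_tsum_of_nonneg hk.convPow (convPow_nonneg (conv_nonneg hnonneg gnonneg)) ?_
  simp_rw [integral_convPow hk, integral_conv_eq_mul hint gint, pow_succ']
  exact (summable_geometric_of_lt_one
    (mul_nonneg (integral_nonneg hnonneg) (integral_nonneg gnonneg)) hlt).mul_left _

lemma isFiniteMeasure_rhoMeas (hnonneg : ∀ t, 0 ≤ h t) (gnonneg : ∀ t, 0 ≤ g t)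
    (hint : Integrable h) (gint : Integrable g) (hlt : (∫ t, h t) * (∫ t, g t) < 1) :
    IsFiniteMeasure (rhoMeas h g) := by
  have hF := integrable_Ffun hnonneg gnonneg hint gint hlt
  have := isFiniteMeasure_withDensity_ofReal ((hF.add hF.comp_neg).add (hF.conv hF.comp_neg)).2
  unfold rhoMeas
  infer_instance

lemma isFiniteMeasure_sigMeas11 (hint : Integrable h) :
    IsFiniteMeasure (sigMeas11 h g μ1 μ3) := by
  have := isFiniteMeasure_withDensity_ofReal
    ((hint.conv hint.comp_neg).const_mul (nu2 h g μ1 μ3)).2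
  have := (Measure.dirac (0 : ℝ)).smul_finite (ENNReal.ofReal_ne_top (r := nu1 h g μ1 μ3))
  unfold sigMeas11
  infer_instance

lemma isFiniteMeasure_sigMeas12 (hint : Integrable h) (gint : Integrable g) :
    IsFiniteMeasure (sigMeas12 h g μ1 μ3) :=
  isFiniteMeasure_withDensity_ofReal ((hint.comp_neg.const_mul _).add (gint.const_mul _)).2

lemma rhoMeas_real_singleton (z : ℝ) : (rhoMeas h g).real {z} = if z = 0 then 1 else 0 := by
  simp [rhoMeas, measureReal_def, Set.indicator_apply, eq_comm, apply_ite ENNReal.toReal]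

lemma sigMeas11_real_singleton (hν : 0 ≤ nu1 h g μ1 μ3) (z : ℝ) :
    (sigMeas11 h g μ1 μ3).real {z} = if z = 0 then nu1 h g μ1 μ3 else 0 := by
  simp [sigMeas11, measureReal_def, Set.indicator_apply, eq_comm, apply_ite ENNReal.toReal, hν]

lemma integral_sigMeas11_real_singleton_sub (hν : 0 ≤ nu1 h g μ1 μ3) (τ : ℝ) :
    ∫ x, (sigMeas11 h g μ1 μ3).real {τ - x} ∂(rhoMeas h g) =
      nu1 h g μ1 μ3 * if τ = 0 then 1 else 0 := by
  have hatom (x : ℝ) : (sigMeas11 h g μ1 μ3).real {τ - x} =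
      ({τ} : Set ℝ).indicator (fun _ => nu1 h g μ1 μ3) x := by
    simp [sigMeas11_real_singleton hν, Set.indicator_apply, sub_eq_zero, eq_comm]
  simp_rw [hatom, integral_indicator_const _ (measurableSet_singleton τ), rhoMeas_real_singleton,
    smul_eq_mul, mul_comm]

lemma sigMeas12_singleton (z : ℝ) : sigMeas12 h g μ1 μ3 {z} = 0 := by
  unfold sigMeas12
  exact measure_singleton z

end Measures

theorem epps_effect_general (h g : ℝ → ℝ)
    (hnonneg : ∀ t, 0 ≤ h t) (gnonneg : ∀ t, 0 ≤ g t)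
    (hint : Integrable h) (gint : Integrable g)
    (hlt : (∫ t, h t) * (∫ t, g t) < 1)
    (μ1 μ3 : ℝ) (hμ1 : 0 ≤ μ1) (hμ3 : 0 ≤ μ3) :
    ∀ τ : ℝ,
      Tendsto (fun Δ : ℝ => C12 h g μ1 μ3 Δ τ) (𝓝[>] 0) (𝓝 0) ∧
      Tendsto (fun Δ : ℝ => C11 h g μ1 μ3 Δ τ) (𝓝[>] 0)
        (𝓝 ((2 * nu1 h g μ1 μ3 / (1 - (∫ t, h t) * (∫ t, g t))) *
          if τ = 0 then 1 else 0)) := by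
  intro τ
  have := isFiniteMeasure_rhoMeas hnonneg gnonneg hint gint hlt
  have := isFiniteMeasure_sigMeas11 (g := g) (μ1 := μ1) (μ3 := μ3) hint
  have := isFiniteMeasure_sigMeas12 (μ1 := μ1) (μ3 := μ3) hint gint
  have hν : 0 ≤ nu1 h g μ1 μ3 := add_nonneg hμ1 (mul_nonneg (integral_nonneg hnonneg) hμ3)
  constructor
  · simpa [C12, measureReal_def, sigMeas12_singleton] using
      (tendsto_integral_integral_gamDelta (rhoMeas h g) (sigMeas12 h g μ1 μ3) τ).const_mul
        (2 / (1 - (∫ t, h t) * ∫ t, g t))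
  · have := (tendsto_integral_integral_gamDelta (rhoMeas h g) (sigMeas11 h g μ1 μ3) τ).const_mul
      (2 / (1 - (∫ t, h t) * ∫ t, g t))
    rw [integral_sigMeas11_real_singleton_sub hν] at this
    unfold C11
    convert this using 2
    ring

/-- **The Epps effect.** For every fixed `τ`, `C₁₂(Δ,τ) → 0` as `Δ → 0`, and
`C₁₁(Δ,τ) → (2ν₁/(1−‖h‖₁‖g‖₁)) 1_{τ=0}` as `Δ → 0`. -/
theorem epps_effect (h g : ℝ → ℝ)
    (hmeas : Measurable h) (gmeas : Measurable g)
    (hnonneg : ∀ t, 0 ≤ h t) (gnonneg : ∀ t, 0 ≤ g t)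
    (hint : Integrable h) (gint : Integrable g)
    (hvan : ∀ t < (0 : ℝ), h t = 0) (gvan : ∀ t < (0 : ℝ), g t = 0)
    (hlt : (∫ t, h t) * (∫ t, g t) < 1)
    (μ1 μ3 : ℝ) (hμ1 : 0 ≤ μ1) (hμ3 : 0 ≤ μ3) :
    ∀ τ : ℝ,
      Tendsto (fun Δ : ℝ => C12 h g μ1 μ3 Δ τ) (𝓝[>] 0) (𝓝 0) ∧
      Tendsto (fun Δ : ℝ => C11 h g μ1 μ3 Δ τ) (𝓝[>] 0)
        (𝓝 ((2 * nu1 h g μ1 μ3 / (1 - (∫ t, h t) * (∫ t, g t))) *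
          if τ = 0 then 1 else 0)) :=
  epps_effect_general h g hnonneg gnonneg hint gint hlt μ1 μ3 hμ1 hμ3
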